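/- Let (a_k) be real numbers with |a_k| ≤ ε_k where Σ ε_k < ∞, and define sequences (φ_k) of functions on a set X by φ_{k+1} = φ_k + a_k pointwise perturbations satisfying ‖φ_{k+1} - φ_∞‖_∞ ≤ ((k-1)/k)‖φ_k - φ_∞‖_∞ + c/k². Then ‖φ_k - φ_∞‖_∞ → 0 and in fact ‖φ_k - φ_∞‖_∞ = O((log k)/k). -/

import Mathlib

/-!
Multiplying the recursion by `k` gives `k e_{k+1} ≤ (k - 1) e_k + c / k`, so `(k - 1) e_k`
increases by at most `c / k` per step and is therefore bounded by `c` times the harmonic number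
`H_{k-1} ≤ 1 + log k`. Dividing by `k - 1 ≥ k / 2` gives the rate `2c (1 + log k) / k`.
-/

open Real

section Recursion

variable {e : ℕ → ℝ} {c : ℝ}

theorem natCast_mul_le_mul_harmonic
    (hrec : ∀ k : ℕ, 1 ≤ k → e (k + 1) ≤ ((k : ℝ) - 1) / k * e k + c / (k : ℝ) ^ 2)
    (k : ℕ) : k * e (k + 1) ≤ c * harmonic k := by
  induction k with
  | zero => simp
  | succ k ih =>
    have hk : (0 : ℝ) < k + 1 := by positivity
    have step := mul_le_mul_of_nonneg_left (hrec (k + 1) (by omega)) hk.le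
    push_cast at step ⊢
    calc ((k : ℝ) + 1) * e (k + 1 + 1)
        ≤ (k + 1) * ((k + 1 - 1) / (k + 1) * e (k + 1) + c / (k + 1) ^ 2) := step
      _ = k * e (k + 1) + c / (k + 1) := by field_simp; ring
      _ ≤ c * harmonic k + c / (k + 1) := by gcongr
      _ = c * harmonic (k + 1) := by push_cast [harmonic_succ]; ring

theorem le_two_mul_one_add_log_div (hc : 0 ≤ c)
    (hrec : ∀ k : ℕ, 1 ≤ k → e (k + 1) ≤ ((k : ℝ) - 1) / k * e k + c / (k : ℝ) ^ 2)
    {k : ℕ} (hk : 2 ≤ k) : e k ≤ 2 * c * (1 + log k) / k := by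
  obtain ⟨j, rfl⟩ : ∃ j, k = j + 1 := ⟨k - 1, by omega⟩
  have hj : (1 : ℝ) ≤ j := by exact_mod_cast (by omega : 1 ≤ j)
  have hlog : 0 ≤ 1 + log ((j + 1 : ℕ) : ℝ) := by positivity
  have hmul : j * e (j + 1) ≤ c * (1 + log ((j + 1 : ℕ) : ℝ)) :=
    calc j * e (j + 1) ≤ c * harmonic j := natCast_mul_le_mul_harmonic hrec j
      _ ≤ c * (1 + log j) := by gcongr; exact harmonic_le_one_add_log j
      _ ≤ c * (1 + log ((j + 1 : ℕ) : ℝ)) := by gcongr; simp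
  calc e (j + 1) ≤ c * (1 + log ((j + 1 : ℕ) : ℝ)) / j := by
        rw [le_div_iff₀ (by linarith)]; linarith
    _ ≤ 2 * c * (1 + log ((j + 1 : ℕ) : ℝ)) / ((j + 1 : ℕ) : ℝ) := by
        rw [div_le_div_iff₀ (by linarith) (by positivity)]
        push_cast at hlog ⊢
        nlinarith [mul_nonneg hc hlog]

end Recursion

theorem stmt_15_general {X : Type*}
    (φ : ℕ → X → ℝ) (φinf : X → ℝ) (e : ℕ → ℝ)
    -- `e k` is the sup norm `‖φ_k - φ_∞‖_∞`
    (he : ∀ k, IsLUB {r : ℝ | ∃ x : X, r = |φ k x - φinf x|} (e k))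
    (c : ℝ) (hc : 0 < c)
    (hrec : ∀ k : ℕ, 1 ≤ k →
      e (k + 1) ≤ ((k : ℝ) - 1) / k * e k + c / (k : ℝ) ^ 2) :
    ∃ M : ℝ, 0 < M ∧ ∀ k : ℕ, 2 ≤ k → ∀ x : X,
      |φ k x - φinf x| ≤ M * (1 + Real.log k) / k :=
  ⟨2 * c, by positivity, fun k hk x =>
    ((he k).1 ⟨x, rfl⟩).trans (le_two_mul_one_add_log_div hc.le hrec hk)⟩

theorem stmt_15 {X : Type*} [Nonempty X]
    (φ : ℕ → X → ℝ) (φinf : X → ℝ) (e : ℕ → ℝ)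
    -- `e k` is the sup norm `‖φ_k - φ_∞‖_∞`
    (he : ∀ k, IsLUB {r : ℝ | ∃ x : X, r = |φ k x - φinf x|} (e k))
    (c C₀ : ℝ) (hc : 0 < c)
    (hinit : e 1 ≤ C₀)
    (hrec : ∀ k : ℕ, 1 ≤ k →
      e (k + 1) ≤ ((k : ℝ) - 1) / k * e k + c / (k : ℝ) ^ 2) :
    ∃ M : ℝ, 0 < M ∧ ∀ k : ℕ, 2 ≤ k → ∀ x : X,
      |φ k x - φinf x| ≤ M * (1 + Real.log k) / k :=
  stmt_15_general φ φinf e he c hc hrec
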